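/- (Proposition 2) Let G_k=(V,E,k) be a strongly connected labeled simple digraph and let G_ℰ=(V,ℰ) be a chain graph. Then the core matrix 𝒜_{k,ℰ} ∈ ℝ^{ℰ×ℰ}, i.e. the unique matrix with A_k diag(K_k) = −I_ℰ 𝒜_{k,ℰ} I_ℰ^T, has all entries nonnegative and all diagonal entries positive. -/

import Mathlib

open Matrix BigOperators Finset

variable {V : Type*}

/-- Directed reachability in the digraph with edge set `F`. -/
def dReach (F : Finset (V × V)) : V → V → Prop :=
  Relation.ReflTransGen fun a b => (a, b) ∈ F

/-- Reachability in the underlying undirected graph of the digraph with edge set `F`. -/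
def uReach (F : Finset (V × V)) : V → V → Prop :=
  Relation.ReflTransGen fun a b => (a, b) ∈ F ∨ (b, a) ∈ F

/-- A digraph is strongly connected if every vertex reaches every other vertex. -/
def StronglyConnected (F : Finset (V × V)) : Prop :=
  ∀ i j : V, dReach F i j

/-- A simple digraph has no self-loops. -/
def NoSelfLoops (F : Finset (V × V)) : Prop :=
  ∀ e ∈ F, e.1 ≠ e.2

/-- The edge set `F` contains a directed cycle. -/
def HasDirectedCycle (F : Finset (V × V)) : Prop :=
  ∃ v : V, Relation.TransGen (fun a b => (a, b) ∈ F) v v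

/-- The Laplacian matrix `A_k` of the labeled digraph `(V, F, k)`:
`(A_k)_{i,j} = k_{j→i}` if `(j→i) ∈ F`, `(A_k)_{i,i} = -∑_{(i→j)∈F} k_{i→j}`, and `0` otherwise. -/
noncomputable def digraphLaplacian [Fintype V] [DecidableEq V]
    (F : Finset (V × V)) (k : V × V → ℝ) : Matrix V V ℝ :=
  Matrix.of fun i j =>
    if i = j then -(∑ e ∈ F.filter (fun e => e.1 = i), k e)
    else if (j, i) ∈ F then k (j, i) else 0

/-- `T` is a directed spanning tree of the strongly connected digraph `E`, rooted at `i`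
and directed towards the root: no directed cycle, and every vertex except `i`
is the source of exactly one edge. -/
def IsSpanningTreeTo [DecidableEq V] (E : Finset (V × V)) (i : V)
    (T : Finset (V × V)) : Prop :=
  T ⊆ E ∧ ¬ HasDirectedCycle T ∧
    ∀ j : V, j ≠ i → (T.filter (fun e => e.1 = j)).card = 1

open scoped Classical in
/-- The tree constant `(K_k)_i = ∑_{T ∈ T_i} ∏_{(j→j')∈T} k_{j→j'}`. -/
noncomputable def treeConst [Fintype V] [DecidableEq V]
    (E : Finset (V × V)) (k : V × V → ℝ) (i : V) : ℝ :=
  ∑ T ∈ E.powerset.filter (fun T => IsSpanningTreeTo E i T), ∏ e ∈ T, k e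

/-- The incidence matrix of the digraph with edge set `F`: in the column of edge `(j→j')`,
entry `-1` in row `j`, entry `+1` in row `j'`, and `0` elsewhere. -/
noncomputable def incidence [DecidableEq V] (F : Finset (V × V)) :
    Matrix V {e : V × V // e ∈ F} ℝ :=
  Matrix.of fun i e =>
    (if (e : V × V).2 = i then (1 : ℝ) else 0) - (if (e : V × V).1 = i then (1 : ℝ) else 0)

/-- A chain graph on the vertex set `V`: for some enumeration `i_1, …, i_m` of `V`, the
edge set is `{i_1 → i_2, i_2 → i_3, …, i_{m-1} → i_m}`. -/
def IsChainGraph {V : Type*} [Fintype V] [DecidableEq V] (F : Finset (V × V)) : Prop :=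
  ∃ g : Fin (Fintype.card V) ≃ V,
    F = Finset.image
      (fun i : Fin (Fintype.card V - 1) =>
        (g ⟨i.1, by have := i.2; omega⟩, g ⟨i.1 + 1, by have := i.2; omega⟩))
      Finset.univ

/-!
Rank the vertices along the chain, so that every chain edge goes from rank `n` to
rank `n + 1`. For the chain edge `e` leaving rank `n`, the indicator of the vertices of
rank `> n` is mapped by `ᵥ* I_ℰ` to the unit vector at `e`, and the indicator of those of
rank `≤ n` to its negative. Pairing both sides of `A_k diag(K_k) = -I_ℰ 𝒜 I_ℰᵀ` with these vectors
expresses `𝒜 e f` as a sum of entries `(A_k diag(K_k)) x y` over `x` on one side of `e` and `y`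
on the other side of `f`; choosing the sides so that these sets are disjoint, only
off-diagonal entries `k_{y→x} (K_k)_y ≥ 0` occur. On the diagonal, strong connectivity yields
an edge of `G` from above `e` to below it, contributing a positive term because every tree
constant is positive: a shortest-path tree towards any root exists.
-/

section Reachability

def ReachesWithin (E : Finset (V × V)) (i : V) : ℕ → V → Prop
  | 0, v => v = i
  | n + 1, v => v = i ∨ ∃ w, (v, w) ∈ E ∧ ReachesWithin E i n w

lemma exists_reachesWithin_of_dReach {E : Finset (V × V)} {i v : V} (h : dReach E v i) :
    ∃ n, ReachesWithin E i n v := by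
  induction h using Relation.ReflTransGen.head_induction_on with
  | refl => exact ⟨0, rfl⟩
  | head hvw _ ih =>
    obtain ⟨n, hn⟩ := ih
    exact ⟨n + 1, Or.inr ⟨_, hvw, hn⟩⟩

lemma exists_descent (E : Finset (V × V)) (hsc : StronglyConnected E) (i : V) :
    ∃ (f : V → V) (d : V → ℕ), ∀ v, v ≠ i → (v, f v) ∈ E ∧ d (f v) < d v := by
  classical
  have hex (v : V) : ∃ n, ReachesWithin E i n v := exists_reachesWithin_of_dReach (hsc v i)
  have hstep (v : V) (hv : v ≠ i) :
      ∃ w, (v, w) ∈ E ∧ Nat.find (hex w) < Nat.find (hex v) := by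
    have hspec := Nat.find_spec (hex v)
    obtain ⟨n, hn⟩ : ∃ n, Nat.find (hex v) = n + 1 :=
      Nat.exists_eq_succ_of_ne_zero fun h0 => hv (by rwa [h0] at hspec)
    rw [hn] at hspec ⊢
    obtain ⟨w, hvw, hw⟩ := hspec.resolve_left hv
    exact ⟨w, hvw, Nat.lt_succ_of_le (Nat.find_le hw)⟩
  choose! f hf using hstep
  exact ⟨f, fun v => Nat.find (hex v), hf⟩

lemma exists_edge_cross_of_dReach {E : Finset (V × V)} (P : V → Prop) {u l : V}
    (hu : ¬ P u) (hl : P l) (h : dReach E u l) :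
    ∃ p q, (p, q) ∈ E ∧ ¬ P p ∧ P q := by
  induction h with
  | refl => exact absurd hl hu
  | @tail b c _ hbc ih =>
    by_cases hb : P b
    · exact ih hb
    · exact ⟨b, c, hbc, hb, hl⟩

lemma not_hasDirectedCycle_of_decreasing {T : Finset (V × V)} (d : V → ℕ)
    (hd : ∀ e ∈ T, d e.2 < d e.1) : ¬ HasDirectedCycle T := by
  rintro ⟨v, hv⟩
  have := Relation.TransGen.lift d (p := (· > ·)) (fun a b hab => hd (a, b) hab) v v hv
  rw [Relation.transGen_eq_self] at this
  exact lt_irrefl _ this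

end Reachability

section SpanningTree

variable [Fintype V] [DecidableEq V]

lemma isSpanningTreeTo_of_descent {E : Finset (V × V)} {i : V} (f : V → V) (d : V → ℕ)
    (hf : ∀ v, v ≠ i → (v, f v) ∈ E ∧ d (f v) < d v) :
    IsSpanningTreeTo E i ((univ.filter (· ≠ i)).image fun v => (v, f v)) := by
  refine ⟨?_, not_hasDirectedCycle_of_decreasing d ?_, fun j hj => ?_⟩
  · simp only [subset_iff, mem_image, mem_filter, mem_univ, true_and]
    rintro _ ⟨v, hv, rfl⟩
    exact (hf v hv).1
  · simp only [mem_image, mem_filter, mem_univ, true_and]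
    rintro _ ⟨v, hv, rfl⟩
    exact (hf v hv).2
  · rw [card_eq_one]
    refine ⟨(j, f j), ?_⟩
    ext ⟨a, b⟩
    simp only [mem_filter, mem_image, mem_univ, true_and, mem_singleton, Prod.mk.injEq]
    constructor
    · rintro ⟨⟨v, -, rfl, rfl⟩, rfl⟩
      exact ⟨rfl, rfl⟩
    · rintro ⟨rfl, rfl⟩
      exact ⟨⟨a, hj, rfl, rfl⟩, rfl⟩

lemma treeConst_pos {E : Finset (V × V)} {k : V × V → ℝ} (hk : ∀ e ∈ E, 0 < k e)
    (hsc : StronglyConnected E) (i : V) : 0 < treeConst E k i := by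
  classical
  obtain ⟨f, d, hf⟩ := exists_descent E hsc i
  have hT := isSpanningTreeTo_of_descent f d hf
  refine sum_pos (fun T hT' => prod_pos fun e he => hk e ?_) ⟨_, mem_filter.2 ⟨?_, hT⟩⟩
  · exact (mem_powerset.1 (mem_filter.1 hT').1) he
  · exact mem_powerset.2 hT.1

end SpanningTree

section OffDiagonalNonneg

variable {ι R : Type*} [CommSemiring R] [PartialOrder R] {M : Matrix ι ι R} {u w : ι → R}

lemma mul_mul_nonneg_of_offDiag_nonneg [IsOrderedRing R] (hM : ∀ x y, x ≠ y → 0 ≤ M x y)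
    (hu : 0 ≤ u) (hw : 0 ≤ w) (hdisj : ∀ x, u x = 0 ∨ w x = 0) (x y : ι) :
    0 ≤ u x * M x y * w y := by
  obtain rfl | hxy := eq_or_ne x y
  · rcases hdisj x with h | h <;> simp [h]
  · exact mul_nonneg (mul_nonneg (hu x) (hM x y hxy)) (hw y)

lemma dotProduct_mulVec_nonneg_of_offDiag_nonneg [Fintype ι] [IsOrderedRing R]
    (hM : ∀ x y, x ≠ y → 0 ≤ M x y)
    (hu : 0 ≤ u) (hw : 0 ≤ w) (hdisj : ∀ x, u x = 0 ∨ w x = 0) : 0 ≤ u ⬝ᵥ M *ᵥ w := by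
  rw [dot_mulVec_eq_sum_sum]
  exact sum_nonneg fun y _ => sum_nonneg fun x _ =>
    mul_mul_nonneg_of_offDiag_nonneg hM hu hw hdisj x y

lemma dotProduct_mulVec_pos_of_offDiag_nonneg [Fintype ι] [IsStrictOrderedRing R]
    (hM : ∀ x y, x ≠ y → 0 ≤ M x y)
    (hu : 0 ≤ u) (hw : 0 ≤ w) (hdisj : ∀ x, u x = 0 ∨ w x = 0) {x y : ι}
    (hux : 0 < u x) (hMxy : 0 < M x y) (hwy : 0 < w y) : 0 < u ⬝ᵥ M *ᵥ w := by
  have hterm := mul_mul_nonneg_of_offDiag_nonneg hM hu hw hdisj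
  rw [dot_mulVec_eq_sum_sum]
  refine sum_pos' (fun y _ => sum_nonneg fun x _ => hterm x y) ⟨y, mem_univ _, ?_⟩
  exact sum_pos' (fun x _ => hterm x y) ⟨x, mem_univ _, mul_pos (mul_pos hux hMxy) hwy⟩

end OffDiagonalNonneg

lemma dotProduct_mul_mul_transpose_mulVec {ι m R : Type*} [Fintype ι] [Fintype m]
    [CommSemiring R]
    (I : Matrix m ι R) (A : Matrix ι ι R) (u w : m → R) :
    u ⬝ᵥ (I * A * Iᵀ) *ᵥ w = (u ᵥ* I) ⬝ᵥ A *ᵥ (w ᵥ* I) := by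
  rw [dotProduct_mulVec, dotProduct_mulVec, ← vecMul_vecMul, ← vecMul_vecMul,
    ← dotProduct_mulVec, mulVec_transpose]

section Cuts

def upperIndicator (rank : V → ℕ) (n : ℕ) : V → ℝ :=
  fun v => if n < rank v then 1 else 0

def lowerIndicator (rank : V → ℕ) (n : ℕ) : V → ℝ :=
  fun v => if rank v ≤ n then 1 else 0

lemma upperIndicator_nonneg (rank : V → ℕ) (n : ℕ) : 0 ≤ upperIndicator rank n :=
  fun v => by unfold upperIndicator; split_ifs <;> norm_num

lemma lowerIndicator_nonneg (rank : V → ℕ) (n : ℕ) : 0 ≤ lowerIndicator rank n :=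
  fun v => by unfold lowerIndicator; split_ifs <;> norm_num

lemma lowerIndicator_eq_zero_or_upperIndicator_eq_zero (rank : V → ℕ) {m n : ℕ} (h : m ≤ n)
    (v : V) : lowerIndicator rank m v = 0 ∨ upperIndicator rank n v = 0 := by
  unfold lowerIndicator upperIndicator
  by_cases hv : rank v ≤ m
  · exact Or.inr (if_neg (by omega))
  · exact Or.inl (if_neg hv)

lemma eq_of_rank_fst_eq {F : Finset (V × V)} {rank : V → ℕ} (hrank : Function.Injective rank)
    (hstep : ∀ e ∈ F, rank e.2 = rank e.1 + 1) {e f : {e : V × V // e ∈ F}}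
    (h : rank e.1.1 = rank f.1.1) : e = f := by
  have h1 := hrank h
  have h2 : e.1.2 = f.1.2 := hrank (by rw [hstep _ e.2, hstep _ f.2, h])
  exact Subtype.ext (Prod.ext h1 h2)

variable [Fintype V] [DecidableEq V]

lemma indicator_vecMul_incidence (F : Finset (V × V)) (p : V → Prop) [DecidablePred p] :
    (fun v => if p v then (1 : ℝ) else 0) ᵥ* incidence F =
      fun e => (if p e.1.2 then 1 else 0) - (if p e.1.1 then 1 else 0) := by
  ext e
  simp [vecMul, dotProduct, incidence, mul_sub, sum_sub_distrib]

variable {F : Finset (V × V)} {rank : V → ℕ}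

lemma upperIndicator_vecMul_incidence (hrank : Function.Injective rank)
    (hstep : ∀ e ∈ F, rank e.2 = rank e.1 + 1) (e : {e : V × V // e ∈ F}) :
    upperIndicator rank (rank e.1.1) ᵥ* incidence F = Pi.single e 1 := by
  ext f
  unfold upperIndicator
  rw [indicator_vecMul_incidence]
  beta_reduce
  rw [hstep _ f.2, Pi.single_apply]
  by_cases hfe : f = e
  · subst hfe; simp
  · have : rank f.1.1 ≠ rank e.1.1 := fun h => hfe (eq_of_rank_fst_eq hrank hstep h)
    simp only [hfe, if_false]
    split_ifs <;> first | omega | norm_num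

lemma lowerIndicator_vecMul_incidence (hrank : Function.Injective rank)
    (hstep : ∀ e ∈ F, rank e.2 = rank e.1 + 1) (e : {e : V × V // e ∈ F}) :
    lowerIndicator rank (rank e.1.1) ᵥ* incidence F = -Pi.single e 1 := by
  ext f
  unfold lowerIndicator
  rw [indicator_vecMul_incidence]
  beta_reduce
  rw [hstep _ f.2, Pi.neg_apply, Pi.single_apply]
  by_cases hfe : f = e
  · subst hfe; simp
  · have : rank f.1.1 ≠ rank e.1.1 := fun h => hfe (eq_of_rank_fst_eq hrank hstep h)
    simp only [hfe, if_false]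
    split_ifs <;> first | omega | norm_num

variable {M : Matrix V V ℝ} {A : Matrix {e : V × V // e ∈ F} {e : V × V // e ∈ F} ℝ}

lemma apply_eq_lower_dotProduct_upper (hrank : Function.Injective rank)
    (hstep : ∀ e ∈ F, rank e.2 = rank e.1 + 1)
    (hA : M = -(incidence F * A * (incidence F)ᵀ)) (e f : {e : V × V // e ∈ F}) :
    A e f = lowerIndicator rank (rank e.1.1) ⬝ᵥ M *ᵥ upperIndicator rank (rank f.1.1) := by
  rw [hA, neg_mulVec, dotProduct_neg, dotProduct_mul_mul_transpose_mulVec,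
    lowerIndicator_vecMul_incidence hrank hstep, upperIndicator_vecMul_incidence hrank hstep,
    mulVec_single_one, neg_dotProduct, neg_neg, single_dotProduct, one_mul]
  rfl

lemma apply_eq_upper_dotProduct_lower (hrank : Function.Injective rank)
    (hstep : ∀ e ∈ F, rank e.2 = rank e.1 + 1)
    (hA : M = -(incidence F * A * (incidence F)ᵀ)) (e f : {e : V × V // e ∈ F}) :
    A e f = upperIndicator rank (rank e.1.1) ⬝ᵥ M *ᵥ lowerIndicator rank (rank f.1.1) := by
  rw [hA, neg_mulVec, dotProduct_neg, dotProduct_mul_mul_transpose_mulVec,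
    lowerIndicator_vecMul_incidence hrank hstep, upperIndicator_vecMul_incidence hrank hstep,
    mulVec_neg, dotProduct_neg, neg_neg, mulVec_single_one, single_dotProduct, one_mul]
  rfl

end Cuts

lemma IsChainGraph.exists_rank [Fintype V] [DecidableEq V] {F : Finset (V × V)}
    (hF : IsChainGraph F) :
    ∃ rank : V → ℕ, Function.Injective rank ∧ ∀ e ∈ F, rank e.2 = rank e.1 + 1 := by
  obtain ⟨g, rfl⟩ := hF
  refine ⟨fun v => g.symm v, Fin.val_injective.comp g.symm.injective, ?_⟩
  simp only [mem_image, mem_univ, true_and]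
  rintro _ ⟨i, rfl⟩
  simp

section Laplacian

variable [Fintype V] [DecidableEq V] {E : Finset (V × V)} {k : V × V → ℝ} {K : V → ℝ}

lemma digraphLaplacian_mul_diagonal_apply_of_ne {x y : V} (hxy : x ≠ y) :
    (digraphLaplacian E k * diagonal K) x y = (if (y, x) ∈ E then k (y, x) else 0) * K y := by
  rw [mul_diagonal]
  simp [digraphLaplacian, hxy]

lemma digraphLaplacian_mul_diagonal_nonneg_of_ne (hk : ∀ e ∈ E, 0 < k e) (hK : 0 ≤ K)
    {x y : V} (hxy : x ≠ y) : 0 ≤ (digraphLaplacian E k * diagonal K) x y := by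
  rw [digraphLaplacian_mul_diagonal_apply_of_ne hxy]
  split_ifs with h
  · exact mul_nonneg (hk _ h).le (hK y)
  · simp

lemma digraphLaplacian_mul_diagonal_pos_of_mem (hk : ∀ e ∈ E, 0 < k e) {x y : V}
    (hxy : x ≠ y) (hyx : (y, x) ∈ E) (hKy : 0 < K y) :
    0 < (digraphLaplacian E k * diagonal K) x y := by
  rw [digraphLaplacian_mul_diagonal_apply_of_ne hxy, if_pos hyx]
  exact mul_pos (hk _ hyx) hKy

end Laplacian

theorem core_matrix_chain_nonneg_pos_diag_general
    {V : Type*} [Fintype V] [DecidableEq V]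
    (E : Finset (V × V))
    (k : V × V → ℝ) (hk : ∀ e ∈ E, 0 < k e)
    (hsc : StronglyConnected E)
    (F : Finset (V × V)) (hF : IsChainGraph F) :
    ∀ A : Matrix {e : V × V // e ∈ F} {e : V × V // e ∈ F} ℝ,
      digraphLaplacian E k * Matrix.diagonal (treeConst E k) = -(incidence F * A * (incidence F)ᵀ) →
      (∀ e e' : {e : V × V // e ∈ F}, 0 ≤ A e e') ∧
      (∀ e : {e : V × V // e ∈ F}, 0 < A e e) := by
  intro A hA
  obtain ⟨rank, hrank, hstep⟩ := hF.exists_rank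
  have hK (i : V) : 0 < treeConst E k i := treeConst_pos hk hsc i
  have hoff : ∀ x y, x ≠ y → 0 ≤ (digraphLaplacian E k * diagonal (treeConst E k)) x y :=
    fun _ _ => digraphLaplacian_mul_diagonal_nonneg_of_ne hk fun i => (hK i).le
  refine ⟨fun e f => ?_, fun e => ?_⟩
  · rcases le_or_gt (rank e.1.1) (rank f.1.1) with hef | hfe
    · rw [apply_eq_lower_dotProduct_upper hrank hstep hA]
      exact dotProduct_mulVec_nonneg_of_offDiag_nonneg hoff (lowerIndicator_nonneg _ _)
        (upperIndicator_nonneg _ _) (lowerIndicator_eq_zero_or_upperIndicator_eq_zero rank hef)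
    · rw [apply_eq_upper_dotProduct_lower hrank hstep hA]
      exact dotProduct_mulVec_nonneg_of_offDiag_nonneg hoff (upperIndicator_nonneg _ _)
        (lowerIndicator_nonneg _ _)
        fun v => (lowerIndicator_eq_zero_or_upperIndicator_eq_zero rank hfe.le v).symm
  · obtain ⟨p, q, hpq, hp, hq⟩ := exists_edge_cross_of_dReach (fun v => rank v ≤ rank e.1.1)
      (by rw [hstep _ e.2]; omega) le_rfl (hsc e.1.2 e.1.1)
    rw [apply_eq_lower_dotProduct_upper hrank hstep hA]
    exact dotProduct_mulVec_pos_of_offDiag_nonneg hoff (lowerIndicator_nonneg _ _)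
      (upperIndicator_nonneg _ _) (lowerIndicator_eq_zero_or_upperIndicator_eq_zero rank le_rfl)
      (by simp [lowerIndicator, hq])
      (digraphLaplacian_mul_diagonal_pos_of_mem hk (by rintro rfl; exact hp hq) hpq (hK p))
      (by simp [upperIndicator, not_le.1 hp])

/-- (Proposition 2) For a strongly connected labeled simple digraph and a chain graph `G_ℰ`,
the core matrix `𝒜_{k,ℰ}`, i.e. the unique matrix with
`A_k diag(K_k) = -I_ℰ 𝒜_{k,ℰ} I_ℰᵀ`, is nonnegative with positive diagonal. -/
theorem core_matrix_chain_nonneg_pos_diag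
    {V : Type*} [Fintype V] [DecidableEq V]
    (E : Finset (V × V)) (hloop : NoSelfLoops E)
    (k : V × V → ℝ) (hk : ∀ e ∈ E, 0 < k e)
    (hsc : StronglyConnected E)
    (F : Finset (V × V)) (hF : IsChainGraph F) :
    ∀ A : Matrix {e : V × V // e ∈ F} {e : V × V // e ∈ F} ℝ,
      digraphLaplacian E k * Matrix.diagonal (treeConst E k) = -(incidence F * A * (incidence F)ᵀ) →
      (∀ e e' : {e : V × V // e ∈ F}, 0 ≤ A e e') ∧
      (∀ e : {e : V × V // e ∈ F}, 0 < A e e) :=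
  core_matrix_chain_nonneg_pos_diag_general E k hk hsc F hF
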